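/- Let V : ℂ^{d_in} → ℂ^{dA}⊗ℂ^{dB} be an isometry (V†V = I), and let N be the quantum channel N(μ) = Tr_B(V μ V†) (with Kraus operators A_b = (I⊗⟨b|)V). Then for every density matrix ρ on ℂ^{d_in}, the constrained Holevo capacity satisfies χ_N(ρ) = H(N(ρ)) − E_F(V ρ V†), where V ρ V† is regarded as a bipartite density matrix on ℂ^{dA}⊗ℂ^{dB}. -/

import Mathlib

open scoped Kronecker Matrix ComplexOrder

noncomputable section

/-- The von Neumann entropy `H(ρ) = -∑ᵢ λᵢ log λᵢ` of a Hermitian matrix,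
where the `λᵢ` are its eigenvalues (with the convention `0 log 0 = 0`,
which holds automatically since `Real.log 0 = 0`). -/
def vNEntropy {n : Type} [Fintype n] [DecidableEq n] (ρ : Matrix n n ℂ) : ℝ :=
  if h : ρ.IsHermitian then -∑ i, h.eigenvalues i * Real.log (h.eigenvalues i) else 0

/-- A density matrix: positive semidefinite with trace 1. -/
def IsDensityMatrix {n : Type} [Fintype n] [DecidableEq n] (ρ : Matrix n n ℂ) : Prop :=
  ρ.PosSemidef ∧ ρ.trace = 1

/-- The rank-one matrix `|v⟩⟨v|`. -/
def outer {n : Type} [Fintype n] (v : n → ℂ) : Matrix n n ℂ :=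
  Matrix.vecMulVec v (star v)

/-- A unit vector. -/
def IsUnitVec {n : Type} [Fintype n] (v : n → ℂ) : Prop :=
  ∑ a, ‖v a‖ ^ 2 = 1

/-- A quantum channel, given by a finite family of Kraus operators `A k`
satisfying the completeness relation `∑ k, (A k)ᴴ * A k = 1`. -/
structure QChannel (I O : Type) [Fintype I] [DecidableEq I] [Fintype O] [DecidableEq O] :
    Type 1 where
  ι : Type
  [instFintype : Fintype ι]
  A : ι → Matrix O I ℂ
  complete : ∑ k, (A k)ᴴ * A k = 1

attribute [instance] QChannel.instFintype

/-- The action `N(ρ) = ∑ₖ Aₖ ρ Aₖᴴ` of a channel on a matrix. -/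
def QChannel.app {I O : Type} [Fintype I] [DecidableEq I] [Fintype O] [DecidableEq O]
    (N : QChannel I O) (ρ : Matrix I I ℂ) : Matrix O O ℂ :=
  ∑ k, N.A k * ρ * (N.A k)ᴴ

theorem kronecker_conjT {l m n p : Type} (A : Matrix l m ℂ) (B : Matrix n p ℂ) :
    (A ⊗ₖ B)ᴴ = Aᴴ ⊗ₖ Bᴴ := by
  ext ⟨i, j⟩ ⟨k, s⟩
  simp [Matrix.conjTranspose_apply, mul_comm]

theorem sum_kronecker_sum {ι₁ ι₂ l m n p : Type} [Fintype ι₁] [Fintype ι₂]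
    (A : ι₁ → Matrix l m ℂ) (B : ι₂ → Matrix n p ℂ) :
    (∑ i, A i) ⊗ₖ (∑ j, B j) = ∑ k : ι₁ × ι₂, A k.1 ⊗ₖ B k.2 := by
  ext ⟨x, y⟩ ⟨x', y'⟩
  simp only [Matrix.sum_apply, Matrix.kroneckerMap_apply, Finset.sum_mul_sum]
  exact (Fintype.sum_prod_type (fun k : ι₁ × ι₂ => A k.1 x x' * B k.2 y y')).symm

/-- The tensor-product channel `N₁ ⊗ N₂`: its Kraus operators are the Kronecker
products of the Kraus operators of the two factors. -/
def QChannel.prod {I₁ O₁ I₂ O₂ : Type}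
    [Fintype I₁] [DecidableEq I₁] [Fintype O₁] [DecidableEq O₁]
    [Fintype I₂] [DecidableEq I₂] [Fintype O₂] [DecidableEq O₂]
    (N₁ : QChannel I₁ O₁) (N₂ : QChannel I₂ O₂) : QChannel (I₁ × I₂) (O₁ × O₂) where
  ι := N₁.ι × N₂.ι
  A := fun k => N₁.A k.1 ⊗ₖ N₂.A k.2
  complete := by
    have h1 : ∀ k : N₁.ι × N₂.ι, (N₁.A k.1 ⊗ₖ N₂.A k.2)ᴴ * (N₁.A k.1 ⊗ₖ N₂.A k.2)
        = ((N₁.A k.1)ᴴ * N₁.A k.1) ⊗ₖ ((N₂.A k.2)ᴴ * N₂.A k.2) := fun k => by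
      rw [kronecker_conjT, Matrix.mul_kronecker_mul]
    rw [Finset.sum_congr rfl fun k _ => h1 k,
      ← sum_kronecker_sum (fun k₁ => (N₁.A k₁)ᴴ * N₁.A k₁) (fun k₂ => (N₂.A k₂)ᴴ * N₂.A k₂),
      N₁.complete, N₂.complete, Matrix.one_kronecker_one]

/-- The minimum output entropy of a channel: the minimum of `H(N(|v⟩⟨v|))`
over unit vectors `v` in the input space. -/
def minOutEntropy {I O : Type} [Fintype I] [DecidableEq I] [Fintype O] [DecidableEq O]
    (N : QChannel I O) : ℝ :=
  sInf { x | ∃ v : I → ℂ, IsUnitVec v ∧ x = vNEntropy (N.app (outer v)) }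

/-- The Holevo capacity `χ_N` of a channel. -/
def holevoCap {I O : Type} [Fintype I] [DecidableEq I] [Fintype O] [DecidableEq O]
    (N : QChannel I O) : ℝ :=
  sSup { x | ∃ (n : ℕ) (p : Fin n → ℝ) (v : Fin n → I → ℂ),
    (∀ i, 0 ≤ p i) ∧ (∑ i, p i = 1) ∧ (∀ i, IsUnitVec (v i)) ∧
    x = vNEntropy (N.app (∑ i, (p i : ℂ) • outer (v i))) -
      ∑ i, p i * vNEntropy (N.app (outer (v i))) }

/-- The constrained Holevo capacity `χ_N(ρ)`: only ensembles averaging to `ρ` are allowed. -/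
def cHolevoCap {I O : Type} [Fintype I] [DecidableEq I] [Fintype O] [DecidableEq O]
    (N : QChannel I O) (ρ : Matrix I I ℂ) : ℝ :=
  sSup { x | ∃ (n : ℕ) (p : Fin n → ℝ) (v : Fin n → I → ℂ),
    (∀ i, 0 ≤ p i) ∧ (∑ i, p i = 1) ∧ (∀ i, IsUnitVec (v i)) ∧
    (∑ i, (p i : ℂ) • outer (v i)) = ρ ∧
    x = vNEntropy (N.app ρ) - ∑ i, p i * vNEntropy (N.app (outer (v i))) }

/-- Partial trace over the second (B) factor of a bipartite matrix. -/
def traceB {A B : Type} [Fintype B] (σ : Matrix (A × B) (A × B) ℂ) : Matrix A A ℂ :=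
  Matrix.of fun a a' => ∑ b, σ (a, b) (a', b)

/-- The entanglement of formation of a bipartite state on `A ⊗ B`. -/
def entF {A B : Type} [Fintype A] [DecidableEq A] [Fintype B] [DecidableEq B]
    (σ : Matrix (A × B) (A × B) ℂ) : ℝ :=
  sInf { x | ∃ (n : ℕ) (p : Fin n → ℝ) (v : Fin n → A × B → ℂ),
    (∀ i, 0 ≤ p i) ∧ (∀ i, IsUnitVec (v i)) ∧
    (∑ i, (p i : ℂ) • outer (v i)) = σ ∧
    x = ∑ i, p i * vNEntropy (traceB (outer (v i))) }

/-- The tensor product of two bipartite states `σ₁` on `A₁ ⊗ B₁` and `σ₂` on `A₂ ⊗ B₂`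
(Kronecker product), reindexed as a bipartite state with A-part `A₁ ⊗ A₂` and
B-part `B₁ ⊗ B₂`. -/
def pairTensor {A₁ B₁ A₂ B₂ : Type}
    (σ₁ : Matrix (A₁ × B₁) (A₁ × B₁) ℂ) (σ₂ : Matrix (A₂ × B₂) (A₂ × B₂) ℂ) :
    Matrix ((A₁ × A₂) × (B₁ × B₂)) ((A₁ × A₂) × (B₁ × B₂)) ℂ :=
  Matrix.of fun x y =>
    σ₁ (x.1.1, x.2.1) (y.1.1, y.2.1) * σ₂ (x.1.2, x.2.2) (y.1.2, y.2.2)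

/-- Trace out the second subsystem (`A₂` and `B₂`) of a quadripartite state. -/
def trace2 {A₁ A₂ B₁ B₂ : Type} [Fintype A₂] [Fintype B₂]
    (σ : Matrix ((A₁ × A₂) × (B₁ × B₂)) ((A₁ × A₂) × (B₁ × B₂)) ℂ) :
    Matrix (A₁ × B₁) (A₁ × B₁) ℂ :=
  Matrix.of fun x y => ∑ a₂, ∑ b₂, σ ((x.1, a₂), (x.2, b₂)) ((y.1, a₂), (y.2, b₂))

/-- Trace out the first subsystem (`A₁` and `B₁`) of a quadripartite state. -/
def trace1 {A₁ A₂ B₁ B₂ : Type} [Fintype A₁] [Fintype B₁]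
    (σ : Matrix ((A₁ × A₂) × (B₁ × B₂)) ((A₁ × A₂) × (B₁ × B₂)) ℂ) :
    Matrix (A₂ × B₂) (A₂ × B₂) ℂ :=
  Matrix.of fun x y => ∑ a₁, ∑ b₁, σ ((a₁, x.1), (b₁, x.2)) ((a₁, y.1), (b₁, y.2))


/-!
An ensemble `{pᵢ, vᵢ}` for `ρ` is pushed forward by `V` to the ensemble `{pᵢ, V vᵢ}` for
`V ρ Vᴴ`, and `N(|vᵢ⟩⟨vᵢ|) = Tr_B |V vᵢ⟩⟨V vᵢ|`. Conversely every ensemble `{pᵢ, wᵢ}` for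
`V ρ Vᴴ` arises in this way: the projection `1 - V Vᴴ` annihilates `V ρ Vᴴ`, hence every `wᵢ`
of positive weight, so `wᵢ = V (Vᴴ wᵢ)`. The Holevo quantities of ensembles for `ρ` are therefore
exactly `H(N(ρ))` minus the entanglement averages of ensembles for `V ρ Vᴴ`, and the latter form
a nonempty set (spectral decomposition) bounded below by `0`.
-/

open Matrix

theorem csSup_image_const_sub {T : Set ℝ} (c : ℝ) (hT : T.Nonempty) (hTb : BddBelow T) :
    sSup ((c - ·) '' T) = c - sInf T :=
  (Antitone.map_csInf_of_continuousAt (by fun_prop) (fun _ _ h => sub_le_sub_left h c) hT hTb).symm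

section Outer

variable {m n : Type} [Fintype m] [Fintype n]

theorem star_dotProduct_self_eq_sum_norm_sq (v : n → ℂ) :
    star v ⬝ᵥ v = ((∑ a, ‖v a‖ ^ 2 : ℝ) : ℂ) := by
  simp [dotProduct, Complex.conj_mul']

theorem isUnitVec_iff_star_dotProduct_self {v : n → ℂ} : IsUnitVec v ↔ star v ⬝ᵥ v = 1 := by
  rw [IsUnitVec, star_dotProduct_self_eq_sum_norm_sq, Complex.ofReal_eq_one]

theorem isUnitVec_single [DecidableEq n] (a : n) : IsUnitVec (Pi.single a 1 : n → ℂ) := by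
  simp [isUnitVec_iff_star_dotProduct_self]

theorem isUnitVec_mulVec_iff_of_isometry [DecidableEq n] {V : Matrix m n ℂ} (hV : Vᴴ * V = 1)
    {v : n → ℂ} : IsUnitVec (V *ᵥ v) ↔ IsUnitVec v := by
  rw [isUnitVec_iff_star_dotProduct_self, isUnitVec_iff_star_dotProduct_self, star_mulVec,
    ← dotProduct_mulVec, mulVec_mulVec, hV, one_mulVec]

theorem trace_outer (v : n → ℂ) : (outer v).trace = star v ⬝ᵥ v := by
  rw [outer, trace_vecMulVec, dotProduct_comm]

theorem mul_outer_mul_conjTranspose (M : Matrix m n ℂ) (v : n → ℂ) :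
    M * outer v * Mᴴ = outer (M *ᵥ v) := by
  rw [outer, outer, mul_vecMulVec, vecMulVec_mul, star_mulVec]

variable {ι : Type} [Fintype ι]

theorem mul_sum_smul_outer_mul_conjTranspose (M : Matrix m n ℂ) (p : ι → ℝ) (v : ι → n → ℂ) :
    M * (∑ i, (p i : ℂ) • outer (v i)) * Mᴴ = ∑ i, (p i : ℂ) • outer (M *ᵥ v i) := by
  simp only [Matrix.mul_sum, Matrix.sum_mul, Matrix.mul_smul, Matrix.smul_mul,
    mul_outer_mul_conjTranspose]

theorem sum_eq_one_of_trace_sum_smul_outer_eq_one {p : ι → ℝ} {v : ι → n → ℂ}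
    (hv : ∀ i, IsUnitVec (v i)) (h : (∑ i, (p i : ℂ) • outer (v i)).trace = 1) : ∑ i, p i = 1 := by
  simp_rw [trace_sum, trace_smul, trace_outer,
    isUnitVec_iff_star_dotProduct_self.1 (hv _), smul_eq_mul, mul_one] at h
  exact_mod_cast h

/-- The trace of `M (∑ pᵢ |vᵢ⟩⟨vᵢ|) Mᴴ` is `∑ pᵢ ‖M vᵢ‖²`. -/
theorem mulVec_eq_zero_of_mul_sum_smul_outer_mul_eq_zero (M : Matrix m n ℂ) {p : ι → ℝ}
    {v : ι → n → ℂ} (hp : ∀ i, 0 ≤ p i)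
    (h : M * (∑ i, (p i : ℂ) • outer (v i)) * Mᴴ = 0) {i : ι} (hi : p i ≠ 0) :
    M *ᵥ v i = 0 := by
  rw [mul_sum_smul_outer_mul_conjTranspose] at h
  have htr := congrArg trace h
  simp only [trace_sum, trace_smul, trace_outer, trace_zero, smul_eq_mul] at htr
  have hnonneg : ∀ j ∈ Finset.univ, 0 ≤ (p j : ℂ) * (star (M *ᵥ v j) ⬝ᵥ M *ᵥ v j) :=
    fun j _ => mul_nonneg (by exact_mod_cast hp j) (dotProduct_star_self_nonneg _)
  have hterm := (Finset.sum_eq_zero_iff_of_nonneg hnonneg).1 htr i (Finset.mem_univ i)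
  rw [mul_eq_zero, Complex.ofReal_eq_zero] at hterm
  exact dotProduct_star_self_eq_zero.1 (hterm.resolve_left hi)

end Outer

section Density

variable {n : Type} [Fintype n] [DecidableEq n]

theorem IsDensityMatrix.nonempty {ρ : Matrix n n ℂ} (hρ : IsDensityMatrix ρ) : Nonempty n := by
  by_contra h
  rw [not_nonempty_iff] at h
  simpa [Matrix.trace] using hρ.2

theorem IsDensityMatrix.sum_eigenvalues {ρ : Matrix n n ℂ} (hρ : IsDensityMatrix ρ) :
    ∑ i, hρ.1.1.eigenvalues i = 1 := by
  simpa using congrArg Complex.re (hρ.1.1.trace_eq_sum_eigenvalues.symm.trans hρ.2)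

theorem vNEntropy_nonneg {ρ : Matrix n n ℂ} (hρ : IsDensityMatrix ρ) : 0 ≤ vNEntropy ρ := by
  rw [vNEntropy, dif_pos hρ.1.1, neg_nonneg]
  have hnonneg := hρ.1.eigenvalues_nonneg
  refine Finset.sum_nonpos fun i _ => mul_nonpos_of_nonneg_of_nonpos (hnonneg i) ?_
  refine Real.log_nonpos (hnonneg i) ?_
  calc hρ.1.1.eigenvalues i ≤ ∑ j, hρ.1.1.eigenvalues j :=
        Finset.single_le_sum (fun j _ => hnonneg j) (Finset.mem_univ i)
    _ = 1 := hρ.sum_eigenvalues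

theorem Matrix.IsHermitian.eq_sum_eigenvalues_smul_outer {A : Matrix n n ℂ} (hA : A.IsHermitian) :
    A = ∑ i, (hA.eigenvalues i : ℂ) • outer (hA.eigenvectorBasis i) := by
  conv_lhs => rw [hA.spectral_theorem, Unitary.conjStarAlgAut_apply]
  ext a b
  simp [mul_apply, sum_apply, outer, vecMulVec_apply, diagonal_apply]
  exact Finset.sum_congr rfl fun i _ => by ring

theorem isUnitVec_eigenvectorBasis {A : Matrix n n ℂ} (hA : A.IsHermitian) (i : n) :
    IsUnitVec (hA.eigenvectorBasis i : n → ℂ) := by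
  rw [IsUnitVec, ← EuclideanSpace.norm_sq_eq, hA.eigenvectorBasis.orthonormal.1 i, one_pow]

end Density

section PartialTrace

variable {A B : Type} [Fintype A] [Fintype B]

theorem trace_traceB (σ : Matrix (A × B) (A × B) ℂ) : (traceB σ).trace = σ.trace := by
  simp [traceB, Matrix.trace, Fintype.sum_prod_type]

theorem traceB_outer (w : A × B → ℂ) : traceB (outer w) = ∑ b, outer (fun a => w (a, b)) := by
  ext a a'
  simp [traceB, outer, Matrix.sum_apply, vecMulVec_apply]

theorem isDensityMatrix_traceB_outer [DecidableEq A] {w : A × B → ℂ} (hw : IsUnitVec w) :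
    IsDensityMatrix (traceB (outer w)) := by
  refine ⟨?_, ?_⟩
  · rw [traceB_outer]
    exact posSemidef_sum _ fun b _ => posSemidef_vecMulVec_self_star _
  · rw [trace_traceB, trace_outer, ← isUnitVec_iff_star_dotProduct_self.1 hw]

end PartialTrace

section Isometry

variable {m n ι : Type} [Fintype m] [DecidableEq m] [Fintype n] [DecidableEq n] [Fintype ι]
  {V : Matrix m n ℂ} {ρ : Matrix n n ℂ} {p : ι → ℝ} {w : ι → m → ℂ}

theorem mulVec_conjTranspose_mulVec_of_sum_smul_outer_eq (hV : Vᴴ * V = 1)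
    (hp : ∀ i, 0 ≤ p i) (hw : ∑ i, (p i : ℂ) • outer (w i) = V * ρ * Vᴴ) {i : ι}
    (hi : p i ≠ 0) : V *ᵥ (Vᴴ *ᵥ w i) = w i := by
  have hPV : (1 - V * Vᴴ) * V = 0 := by
    rw [Matrix.sub_mul, Matrix.one_mul, Matrix.mul_assoc, hV, Matrix.mul_one, sub_self]
  have hzero : (1 - V * Vᴴ) * (∑ i, (p i : ℂ) • outer (w i)) * (1 - V * Vᴴ)ᴴ = 0 := by
    rw [hw, show (1 - V * Vᴴ) * (V * ρ * Vᴴ) * (1 - V * Vᴴ)ᴴ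
        = (1 - V * Vᴴ) * V * ρ * ((1 - V * Vᴴ) * V)ᴴ by
      simp only [conjTranspose_mul, Matrix.mul_assoc], hPV]
    simp
  have h := mulVec_eq_zero_of_mul_sum_smul_outer_mul_eq_zero _ hp hzero hi
  rw [sub_mulVec, one_mulVec, sub_eq_zero, ← mulVec_mulVec] at h
  exact h.symm

theorem exists_sum_smul_outer_eq_of_isometry [Nonempty n] (hV : Vᴴ * V = 1)
    (hp : ∀ i, 0 ≤ p i) (hwu : ∀ i, IsUnitVec (w i))
    (hw : ∑ i, (p i : ℂ) • outer (w i) = V * ρ * Vᴴ) :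
    ∃ v : ι → n → ℂ, (∀ i, IsUnitVec (v i)) ∧ ∑ i, (p i : ℂ) • outer (v i) = ρ ∧
      ∀ i, p i ≠ 0 → V *ᵥ v i = w i := by
  have hrange i (hi : p i ≠ 0) := mulVec_conjTranspose_mulVec_of_sum_smul_outer_eq hV hp hw hi
  refine ⟨fun i => if p i = 0 then Pi.single (Classical.arbitrary n) 1 else Vᴴ *ᵥ w i,
    fun i => ?_, ?_, fun i hi => by simp [hi, hrange i hi]⟩
  · by_cases hi : p i = 0
    · simpa [hi] using isUnitVec_single _
    · simpa [hi, ← isUnitVec_mulVec_iff_of_isometry hV, hrange i hi] using hwu i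
  · calc ∑ i, (p i : ℂ) •
          outer (if p i = 0 then Pi.single (Classical.arbitrary n) 1 else Vᴴ *ᵥ w i)
        = ∑ i, (p i : ℂ) • outer (Vᴴ *ᵥ w i) :=
          Finset.sum_congr rfl fun i _ => by by_cases hi : p i = 0 <;> simp [hi]
      _ = Vᴴ * (V * ρ * Vᴴ) * V := by
          rw [← hw, ← mul_sum_smul_outer_mul_conjTranspose, conjTranspose_conjTranspose]
      _ = ρ := by
          simp only [Matrix.mul_assoc]
          rw [hV, Matrix.mul_one, ← Matrix.mul_assoc, hV, Matrix.one_mul]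

end Isometry

/-- The Matsumoto–Shimono–Winter correspondence: for the channel
`N(μ) = Tr_B (V μ Vᴴ)` obtained from an isometry `V`, the constrained Holevo capacity
satisfies `χ_N(ρ) = H(N(ρ)) - E_F(V ρ Vᴴ)`. -/
theorem msw_correspondence {dIn dA dB : ℕ}
    (V : Matrix (Fin dA × Fin dB) (Fin dIn) ℂ) (hV : Vᴴ * V = 1)
    (N : QChannel (Fin dIn) (Fin dA))
    (hN : ∀ μ : Matrix (Fin dIn) (Fin dIn) ℂ, N.app μ = traceB (V * μ * Vᴴ))
    (ρ : Matrix (Fin dIn) (Fin dIn) ℂ) (hρ : IsDensityMatrix ρ) :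
    cHolevoCap N ρ = vNEntropy (N.app ρ) - entF (V * ρ * Vᴴ) := by
  have hNout (v : Fin dIn → ℂ) : N.app (outer v) = traceB (outer (V *ᵥ v)) := by
    rw [hN, mul_outer_mul_conjTranspose]
  have : Nonempty (Fin dIn) := hρ.nonempty
  unfold cHolevoCap entF
  rw [← csSup_image_const_sub]
  · congr 1
    ext x
    constructor
    · rintro ⟨n, p, v, hp, -, hv, hρv, rfl⟩
      refine ⟨_, ⟨n, p, fun i => V *ᵥ v i, hp,
        fun i => (isUnitVec_mulVec_iff_of_isometry hV).2 (hv i),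
        by rw [← mul_sum_smul_outer_mul_conjTranspose, hρv], rfl⟩, by simp only [hNout]⟩
    · rintro ⟨s, ⟨n, p, w, hp, hw, hσ, rfl⟩, rfl⟩
      obtain ⟨v, hv, hρv, hVv⟩ := exists_sum_smul_outer_eq_of_isometry hV hp hw hσ
      refine ⟨n, p, v, hp, sum_eq_one_of_trace_sum_smul_outer_eq_one hw ?_, hv, hρv, ?_⟩
      · rw [hσ, trace_mul_cycle, hV, Matrix.one_mul, hρ.2]
      · congr 1
        refine Finset.sum_congr rfl fun i _ => ?_
        by_cases hi : p i = 0
        · simp [hi]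
        · rw [hNout, hVv i hi]
  · have hherm := hρ.1.1
    exact ⟨_, dIn, _, fun i => V *ᵥ hherm.eigenvectorBasis i, hρ.1.eigenvalues_nonneg,
      fun i => (isUnitVec_mulVec_iff_of_isometry hV).2 (isUnitVec_eigenvectorBasis hherm i),
      by rw [← mul_sum_smul_outer_mul_conjTranspose, ← hherm.eq_sum_eigenvalues_smul_outer], rfl⟩
  · exact ⟨0, by
      rintro _ ⟨n, p, w, hp, hw, -, rfl⟩
      exact Finset.sum_nonneg fun i _ =>
        mul_nonneg (hp i) (vNEntropy_nonneg (isDensityMatrix_traceB_outer (hw i)))⟩
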